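/- Define η : ℕ* → ℤ by η(w) = (−1)^{i(t)} if the word w followed by one extra letter 0 is the code of a Schröder tree t, and η(w) = 0 otherwise (in particular η(empty word) = 1, since the one-letter word 0 codes the leaf). Define κ : ℕ* → ℤ by κ(empty word) = 1, κ(w) = (−1)^{i(t)−1} if w is nonempty and w followed by one extra letter 0 is the code of a prime Schröder tree t, and κ(w) = 0 otherwise. Then κ ∗ η = η ∗ κ = e; that is, the convolution inverse of η is supported, besides the empty word, exactly on the codes (with final letter 0 removed) of prime Schröder trees, where it takes the multiplicity-free values (−1)^{i(t)−1}. -/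

import Mathlib

/-- Plane trees. -/
inductive PTree : Type where
  | node : List PTree → PTree

mutual
  /-- Number of internal nodes of a plane tree. -/
  def inodesT : PTree → ℕ
    | .node [] => 0
    | .node (t :: ts) => 1 + inodesT t + inodesL ts
  def inodesL : List PTree → ℕ
    | [] => 0
    | t :: ts => inodesT t + inodesL ts
end

/-- A Schröder tree: every internal node has at least two children. -/
inductive Reduced : PTree → Prop where
  | leaf : Reduced (.node [])
  | node : ∀ ts : List PTree, 2 ≤ ts.length → (∀ t ∈ ts, Reduced t) → Reduced (.node ts)

/-- A prime Schröder tree: a Schröder tree of positive weight whose rightmost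
child subtree of the root is a leaf. -/
def IsPrimeTree (t : PTree) : Prop :=
  Reduced t ∧ ∃ ts : List PTree, t = .node ts ∧ ts.getLast? = some (.node [])

mutual
  /-- Polish-notation code of a plane tree: the leaf is coded by `[0]`, a root with
  `m ≥ 2` children is coded by the letter `m − 1` followed by the codes of the children. -/
  def codeT : PTree → List ℕ
    | .node [] => [0]
    | .node (t :: ts) => (ts.length) :: (codeT t ++ codeL ts)
  def codeL : List PTree → List ℕ
    | [] => []
    | t :: ts => codeT t ++ codeL ts
end

/-!
Grafting a Schröder tree `s` onto the rightmost leaf child of the root of a prime tree `p`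
gives a Schröder tree `t` with `i(t) = i(p) + i(s)`, whose code minus its final `0` is the
concatenation of those of `p` and `s`. Every Schröder tree of positive weight arises this way,
and since codes of Schröder trees are prefix-free it arises only once. So for `w ≠ []` the only
nonzero terms of `(κ ∗ η)(w)` are `η(w)` and `κ(a) η(b)` for the unique splitting `w = a b` into
a prime and a Schröder word, and these cancel. As `κ([]) = 1`, `κ` is left-cancellable for the
associative convolution, and `κ ∗ (η ∗ κ) = (κ ∗ η) ∗ κ = κ ∗ e` gives `η ∗ κ = e`.
-/

namespace WordConv

open Finset

variable {α R : Type*}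

def conv [Semiring R] (f g : List α → R) (w : List α) : R :=
  ∑ i ∈ range (w.length + 1), f (w.take i) * g (w.drop i)

def unit [Semiring R] (w : List α) : R := if w = [] then 1 else 0

section Semiring

variable [Semiring R]

theorem unit_conv (f : List α → R) : conv unit f = f := by
  funext w
  rw [conv, sum_range_succ', sum_eq_zero fun i hi => ?_]
  · simp [unit]
  · rw [mem_range] at hi
    simp [unit, List.ne_nil_of_length_pos (Nat.zero_lt_of_lt hi)]

theorem conv_unit (f : List α → R) : conv f unit = f := by
  funext w
  rw [conv, sum_range_succ, sum_eq_zero fun i hi => ?_]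
  · simp [unit]
  · simp_all [unit, List.drop_eq_nil_iff]

theorem conv_assoc (f g h : List α → R) : conv (conv f g) h = conv f (conv g h) := by
  funext w
  let F j k := f (w.take j) * (g ((w.drop j).take k) * h ((w.drop j).drop k))
  calc conv (conv f g) h w
      = ∑ i ∈ range (w.length + 1), ∑ j ∈ range (i + 1), F j (i - j) := by
        refine sum_congr rfl fun i hi => ?_
        rw [mem_range, Nat.lt_succ_iff] at hi
        rw [conv, List.length_take_of_le hi, sum_mul]
        refine sum_congr rfl fun j hj => ?_
        rw [mem_range, Nat.lt_succ_iff] at hj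
        simp only [F, List.take_take, min_eq_left hj, List.drop_take, List.drop_drop,
          Nat.add_sub_cancel' hj, mul_assoc]
    _ = ∑ j ∈ range (w.length + 1), ∑ k ∈ range (w.length + 1 - j), F j k :=
        sum_range_diag_flip _ F
    _ = conv f (conv g h) w := by
        refine sum_congr rfl fun j hj => ?_
        rw [mem_range, Nat.lt_succ_iff] at hj
        rw [conv, mul_sum, List.length_drop, Nat.sub_add_comm hj]

theorem conv_append_eq_add {f g : List α → R} {a b : List α} (ha : a ≠ [])
    (h : ∀ i ≤ (a ++ b).length, i ≠ 0 → i ≠ a.length →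
      f ((a ++ b).take i) * g ((a ++ b).drop i) = 0) :
    conv f g (a ++ b) = f [] * g (a ++ b) + f a * g b := by
  rw [conv, sum_eq_add 0 a.length (Ne.symm (List.length_pos_iff.2 ha).ne')]
  · simp
  · intro i hi ⟨hi0, hia⟩
    exact h i (Nat.lt_succ_iff.1 (mem_range.1 hi)) hi0 hia
  · simp
  · simp

end Semiring

section Ring

variable [Ring R]

theorem conv_left_cancel_apply {f g g' : List α → R} (hf : f [] = 1)
    (h : conv f g = conv f g') (w : List α) : g w = g' w := by
  have hw := congrFun h w
  rw [conv, conv, sum_range_succ', sum_range_succ', sum_congr rfl fun i hi => by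
    rw [conv_left_cancel_apply hf h (w.drop (i + 1))]] at hw
  simpa [hf] using hw
termination_by w.length
decreasing_by simp at hi; simp; omega

theorem conv_eq_unit_of_conv_eq_unit {f g : List α → R} (hf : f [] = 1)
    (h : conv f g = unit) : conv g f = unit := by
  funext w
  refine conv_left_cancel_apply hf ?_ w
  rw [← conv_assoc, h, unit_conv, conv_unit]

end Ring

end WordConv

theorem reduced_node_iff {ts : List PTree} :
    Reduced (.node ts) ↔ ts = [] ∨ 2 ≤ ts.length ∧ ∀ t ∈ ts, Reduced t := by
  constructor
  · rintro (_ | ⟨_, hlen, hts⟩)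
    exacts [.inl rfl, .inr ⟨hlen, hts⟩]
  · rintro (rfl | ⟨hlen, hts⟩)
    exacts [.leaf, .node ts hlen hts]

theorem Reduced.of_mem {ts : List PTree} (h : Reduced (.node ts)) {t : PTree} (ht : t ∈ ts) :
    Reduced t := by
  rcases reduced_node_iff.1 h with rfl | ⟨-, hts⟩
  exacts [absurd ht List.not_mem_nil, hts t ht]

theorem reduced_node_append_singleton_iff {qs : List PTree} {s : PTree} :
    Reduced (.node (qs ++ [s])) ↔ Reduced (.node (qs ++ [.node []])) ∧ Reduced s := by
  simp [reduced_node_iff, or_imp, forall_and, and_assoc]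

mutual
theorem exists_codeT_eq_append_zero : ∀ t : PTree, ∃ u, codeT t = u ++ [0]
  | .node [] => ⟨[], rfl⟩
  | .node (t :: ts) => by
      obtain ⟨u, hu⟩ := exists_codeT_append_codeL_eq_append_zero t ts
      exact ⟨ts.length :: u, by simp [codeT, hu]⟩
termination_by t => sizeOf t
theorem exists_codeT_append_codeL_eq_append_zero :
    ∀ (t : PTree) (ts : List PTree), ∃ u, codeT t ++ codeL ts = u ++ [0]
  | t, [] => by
      obtain ⟨u, hu⟩ := exists_codeT_eq_append_zero t
      exact ⟨u, by simp [codeL, hu]⟩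
  | t, s :: ts => by
      obtain ⟨u, hu⟩ := exists_codeT_append_codeL_eq_append_zero s ts
      exact ⟨codeT t ++ u, by simp [codeL, hu]⟩
termination_by t ts => sizeOf t + sizeOf ts
end

theorem codeL_append (xs ys : List PTree) : codeL (xs ++ ys) = codeL xs ++ codeL ys := by
  induction xs with
  | nil => rfl
  | cons x xs ih => simp [codeL, ih]

theorem inodesL_append (xs ys : List PTree) :
    inodesL (xs ++ ys) = inodesL xs + inodesL ys := by
  induction xs with
  | nil => simp [inodesL]
  | cons x xs ih => simp [inodesL, ih, Nat.add_assoc]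

theorem codeT_node_append_singleton {qs : List PTree} {a : List ℕ}
    (ha : codeT (.node (qs ++ [.node []])) = a ++ [0]) (s : PTree) :
    codeT (.node (qs ++ [s])) = a ++ codeT s := by
  cases qs with
  | nil =>
      obtain rfl : [0] = a := List.append_cancel_right ha
      simp [codeT, codeL]
  | cons q qs =>
      simp only [List.cons_append, codeT, codeL_append, codeL, List.append_nil] at ha ⊢
      rw [← List.cons_append, ← List.append_assoc] at ha
      obtain rfl := List.append_cancel_right ha
      simp

theorem inodesT_node_append_singleton (qs : List PTree) (s : PTree) :
    inodesT (.node (qs ++ [s])) = inodesT (.node (qs ++ [.node []])) + inodesT s := by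
  cases qs with
  | nil => simp [inodesT, inodesL]
  | cons q qs => simp [inodesT, inodesL, inodesL_append]; omega

theorem inodesT_node_pos {ts : List PTree} (hts : ts ≠ []) : 0 < inodesT (.node ts) := by
  obtain ⟨t, ts, rfl⟩ := List.exists_cons_of_ne_nil hts
  simp [inodesT]

theorem Reduced.one_le_length {t : PTree} {ts : List PTree} (h : Reduced (.node (t :: ts))) :
    1 ≤ ts.length := by
  simpa using (reduced_node_iff.1 h).resolve_left (List.cons_ne_nil t ts) |>.1

-- In the mixed cases the root letter of the non-leaf tree is at least `1`: no unary nodes.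
mutual
theorem eq_of_codeT_append_eq : ∀ {a b : PTree} {x y : List ℕ}, Reduced a → Reduced b →
    codeT a ++ x = codeT b ++ y → a = b ∧ x = y
  | .node [], .node [], x, y, _, _, h => ⟨rfl, by simpa [codeT] using h⟩
  | .node [], .node (b :: bs), x, y, _, hb, h => by
      have := hb.one_le_length
      simp only [codeT, List.cons_append, List.cons.injEq] at h
      omega
  | .node (a :: as), .node [], x, y, ha, _, h => by
      have := ha.one_le_length
      simp only [codeT, List.cons_append, List.cons.injEq] at h
      omega
  | .node (a :: as), .node (b :: bs), x, y, ha, hb, h => by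
      simp only [codeT, List.cons_append, List.cons.injEq, List.append_assoc] at h
      obtain ⟨hlen, h⟩ := h
      obtain ⟨rfl, hrest⟩ := eq_of_codeT_append_eq (ha.of_mem (List.mem_cons_self ..))
        (hb.of_mem (List.mem_cons_self ..)) h
      obtain ⟨rfl, rfl⟩ := eq_of_codeL_append_eq (fun t ht => ha.of_mem (List.mem_cons_of_mem _ ht))
        (fun t ht => hb.of_mem (List.mem_cons_of_mem _ ht)) hlen hrest
      exact ⟨rfl, rfl⟩
theorem eq_of_codeL_append_eq : ∀ {as bs : List PTree} {x y : List ℕ},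
    (∀ t ∈ as, Reduced t) → (∀ t ∈ bs, Reduced t) → as.length = bs.length →
    codeL as ++ x = codeL bs ++ y → as = bs ∧ x = y
  | [], [], x, y, _, _, _, h => ⟨rfl, h⟩
  | a :: as, b :: bs, x, y, ha, hb, hlen, h => by
      simp only [codeL, List.append_assoc] at h
      obtain ⟨rfl, hrest⟩ := eq_of_codeT_append_eq (ha a List.mem_cons_self)
        (hb b List.mem_cons_self) h
      obtain ⟨rfl, rfl⟩ := eq_of_codeL_append_eq (fun t ht => ha t (List.mem_cons_of_mem _ ht))
        (fun t ht => hb t (List.mem_cons_of_mem _ ht)) (Nat.succ_injective hlen) hrest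
      exact ⟨rfl, rfl⟩
end

theorem codeT_injOn : Set.InjOn codeT {t | Reduced t} := fun _ ha _ hb h =>
  (eq_of_codeT_append_eq (x := []) (y := []) ha hb (by simpa using h)).1

theorem IsPrimeTree.exists_eq_node {p : PTree} (hp : IsPrimeTree p) :
    ∃ qs : List PTree, p = .node (qs ++ [.node []]) := by
  obtain ⟨-, cs, rfl, hlast⟩ := hp
  obtain ⟨qs, a, rfl⟩ := (List.eq_nil_or_concat' cs).resolve_left (by rintro rfl; simp at hlast)
  rw [List.getLast?_concat, Option.some.injEq] at hlast
  exact ⟨qs, by rw [hlast]⟩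

theorem exists_eq_node_append_singleton {t : PTree} (ht : codeT t ≠ [0]) :
    ∃ qs s, t = .node (qs ++ [s]) := by
  obtain ⟨ts⟩ := t
  obtain ⟨qs, s, rfl⟩ := (List.eq_nil_or_concat' ts).resolve_left (by rintro rfl; exact ht rfl)
  exact ⟨qs, s, rfl⟩

def IsSchroderWord (w : List ℕ) : Prop := ∃ t, Reduced t ∧ codeT t = w ++ [0]

def IsPrimeWord (w : List ℕ) : Prop := ∃ t, IsPrimeTree t ∧ codeT t = w ++ [0]

theorem IsPrimeWord.append {a b : List ℕ} (ha : IsPrimeWord a) (hb : IsSchroderWord b) :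
    IsSchroderWord (a ++ b) := by
  obtain ⟨p, hp, hcp⟩ := ha
  obtain ⟨s, hs, hcs⟩ := hb
  obtain ⟨qs, rfl⟩ := hp.exists_eq_node
  refine ⟨.node (qs ++ [s]), reduced_node_append_singleton_iff.2 ⟨hp.1, hs⟩, ?_⟩
  rw [codeT_node_append_singleton hcp, hcs, List.append_assoc]

theorem IsPrimeWord.eq_of_append_eq {a b a' b' : List ℕ} (ha : IsPrimeWord a)
    (hb : IsSchroderWord b) (ha' : IsPrimeWord a') (hb' : IsSchroderWord b')
    (h : a ++ b = a' ++ b') : a = a' := by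
  obtain ⟨p, hp, hcp⟩ := ha
  obtain ⟨s, hs, hcs⟩ := hb
  obtain ⟨p', hp', hcp'⟩ := ha'
  obtain ⟨s', hs', hcs'⟩ := hb'
  obtain ⟨qs, rfl⟩ := hp.exists_eq_node
  obtain ⟨qs', rfl⟩ := hp'.exists_eq_node
  have hgraft : PTree.node (qs ++ [s]) = .node (qs' ++ [s']) := by
    refine codeT_injOn (reduced_node_append_singleton_iff.2 ⟨hp.1, hs⟩)
      (reduced_node_append_singleton_iff.2 ⟨hp'.1, hs'⟩) ?_
    simp only [codeT_node_append_singleton hcp, codeT_node_append_singleton hcp', hcs, hcs',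
      ← List.append_assoc, h]
  obtain rfl : s = s' := (by simpa using hgraft : qs = qs' ∧ s = s').2
  rw [hcs', List.append_cancel_right_eq] at hcs
  rw [hcs] at h
  exact List.append_cancel_right h

open WordConv

theorem isPrimeWord_and_isSchroderWord_of_mul_ne_zero {R : Type*} [MulZeroClass R]
    {f g : List ℕ → R} (hf : ∀ w, w ≠ [] → ¬ IsPrimeWord w → f w = 0)
    (hg : ∀ w, ¬ IsSchroderWord w → g w = 0) {a b : List ℕ} (ha : a ≠ []) (h : f a * g b ≠ 0) :
    IsPrimeWord a ∧ IsSchroderWord b :=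
  ⟨by_contra fun h' => h (by rw [hf a ha h', zero_mul]),
    by_contra fun h' => h (by rw [hg b h', mul_zero])⟩

theorem take_ne_nil_of_le_length {α : Type*} {w : List α} {i : ℕ} (hi : i ≤ w.length)
    (hi0 : i ≠ 0) : w.take i ≠ [] := by
  simpa [List.take_eq_nil_iff, hi0] using List.ne_nil_of_length_pos (by omega)

theorem conv_eq_zero_of_not_isSchroderWord {η κ : List ℕ → ℤ}
    (hη0 : ∀ w, ¬ IsSchroderWord w → η w = 0)
    (hκ0 : ∀ w, w ≠ [] → ¬ IsPrimeWord w → κ w = 0) {w : List ℕ} (hw : ¬ IsSchroderWord w) :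
    conv κ η w = 0 := by
  refine Finset.sum_eq_zero fun i hi => ?_
  rcases eq_or_ne i 0 with rfl | hi0
  · rw [List.drop_zero, hη0 w hw, mul_zero]
  by_contra hne
  obtain ⟨hp, hs⟩ := isPrimeWord_and_isSchroderWord_of_mul_ne_zero hκ0 hη0
    (take_ne_nil_of_le_length (Nat.lt_succ_iff.1 (Finset.mem_range.1 hi)) hi0) hne
  exact hw (List.take_append_drop i w ▸ hp.append hs)

theorem conv_eq_zero_of_isSchroderWord {η κ : List ℕ → ℤ}
    (hη : ∀ (w : List ℕ) (t : PTree), Reduced t → codeT t = w ++ [0] →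
      η w = (-1) ^ (inodesT t))
    (hη0 : ∀ w, ¬ IsSchroderWord w → η w = 0) (hκe : κ [] = 1)
    (hκ : ∀ (w : List ℕ) (t : PTree), w ≠ [] → IsPrimeTree t → codeT t = w ++ [0] →
      κ w = (-1) ^ (inodesT t - 1))
    (hκ0 : ∀ w, w ≠ [] → ¬ IsPrimeWord w → κ w = 0) {w : List ℕ} (hw : w ≠ [])
    (hS : IsSchroderWord w) : conv κ η w = 0 := by
  obtain ⟨t, ht, hct⟩ := hS
  obtain ⟨qs, s, rfl⟩ := exists_eq_node_append_singleton (t := t) (by simp [hct, hw])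
  obtain ⟨hp, hs⟩ := reduced_node_append_singleton_iff.1 ht
  have hprime : IsPrimeTree (.node (qs ++ [.node []])) := ⟨hp, _, rfl, List.getLast?_concat⟩
  obtain ⟨a, hca⟩ := exists_codeT_eq_append_zero (.node (qs ++ [.node []]))
  obtain ⟨b, hcb⟩ := exists_codeT_eq_append_zero s
  obtain rfl : w = a ++ b := by
    rw [codeT_node_append_singleton hca, hcb, ← List.append_assoc] at hct
    exact (List.append_cancel_right hct).symm
  have ha : a ≠ [] := by
    rintro rfl
    simpa using codeT_injOn hp Reduced.leaf hca
  rw [conv_append_eq_add ha, hκe, one_mul, hη _ _ ht hct, hκ a _ ha hprime hca, hη b s hs hcb,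
    inodesT_node_append_singleton]
  · obtain ⟨k, hk⟩ := Nat.exists_eq_add_one.2 (inodesT_node_pos (List.concat_ne_nil (.node []) qs))
    rw [hk, Nat.add_sub_cancel]
    ring
  · intro i hi hi0 hia
    by_contra hne
    obtain ⟨hpi, hsi⟩ :=
      isPrimeWord_and_isSchroderWord_of_mul_ne_zero hκ0 hη0 (take_ne_nil_of_le_length hi hi0) hne
    have := hpi.eq_of_append_eq hsi ⟨_, hprime, hca⟩ ⟨s, hs, hcb⟩ (List.take_append_drop i _)
    exact hia ((List.length_take_of_le hi).symm.trans (congrArg List.length this))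

/-- let `η(w) = (−1)^{i(t)}` if `w ++ [0]` is the code of a Schröder
tree `t` and `0` otherwise, and let `κ([]) = 1`, `κ(w) = (−1)^{i(t)−1}` if `w` is
nonempty and `w ++ [0]` is the code of a prime Schröder tree `t`, `κ(w) = 0`
otherwise. Then `κ ∗ η = η ∗ κ = e` for the convolution product on functions
`ℕ* → ℤ`. -/
theorem stmt1 (η κ : List ℕ → ℤ)
    (hη : ∀ (w : List ℕ) (t : PTree), Reduced t → codeT t = w ++ [0] →
      η w = (-1) ^ (inodesT t))
    (hη0 : ∀ w : List ℕ, (¬ ∃ t : PTree, Reduced t ∧ codeT t = w ++ [0]) → η w = 0)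
    (hκe : κ [] = 1)
    (hκ : ∀ (w : List ℕ) (t : PTree), w ≠ [] → IsPrimeTree t → codeT t = w ++ [0] →
      κ w = (-1) ^ (inodesT t - 1))
    (hκ0 : ∀ w : List ℕ, w ≠ [] →
      (¬ ∃ t : PTree, IsPrimeTree t ∧ codeT t = w ++ [0]) → κ w = 0) :
    ∀ w : List ℕ,
      (∑ i ∈ Finset.range (w.length + 1), κ (w.take i) * η (w.drop i)) =
        (if w = [] then 1 else 0) ∧
      (∑ i ∈ Finset.range (w.length + 1), η (w.take i) * κ (w.drop i)) =
        (if w = [] then 1 else 0) := by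
  have hη_nil : η [] = 1 := by simpa [inodesT] using hη [] (.node []) .leaf rfl
  have hleft : conv κ η = unit := by
    funext w
    rcases eq_or_ne w [] with rfl | hw
    · simp [conv, unit, hκe, hη_nil]
    rw [unit, if_neg hw]
    by_cases hS : IsSchroderWord w
    · exact conv_eq_zero_of_isSchroderWord hη hη0 hκe hκ hκ0 hw hS
    · exact conv_eq_zero_of_not_isSchroderWord hη0 hκ0 hS
  have hright := conv_eq_unit_of_conv_eq_unit hκe hleft
  exact fun w => ⟨congrFun hleft w, congrFun hright w⟩
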